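/- For t ≥ 7 and all x ≥ 0, the polynomial e_t^E := s₁ - s₂ - ((4t²+5t+3)/(t+2))s₃ + ((t-1)³/(t+2))s₄ satisfies e_t^E(0,x,1) = x(x+1)(x-1)² and e_t^E(x,1,1) = x(x-t)²(2x + (t-7)/(t+2)), hence e_t^E(x,1,1) ≥ 0 and e_t^E(0,x,1) ≥ 0 for all x ≥ 0. -/
import Mathlib


/-- Quintic symmetric basis forms in three variables. -/
def s0 (a b c : ℝ) : ℝ := (a^5 + b^5 + c^5) - a*b*c*(a*b + b*c + c*a)
def s1 (a b c : ℝ) : ℝ :=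
  (a^4*b + a*b^4 + b^4*c + b*c^4 + c^4*a + c*a^4) - 2*a*b*c*(a*b + b*c + c*a)
def s2 (a b c : ℝ) : ℝ :=
  (a^3*b^2 + a^2*b^3 + b^3*c^2 + b^2*c^3 + c^3*a^2 + c^2*a^3) - 2*a*b*c*(a*b + b*c + c*a)
def s3 (a b c : ℝ) : ℝ := a*b*c*(a^2 + b^2 + c^2) - a*b*c*(a*b + b*c + c*a)
def s4 (a b c : ℝ) : ℝ := a*b*c*(a*b + b*c + c*a)

/-- The extremal quintic `e_t^E = s₁ - s₂ - ((4t²+5t+3)/(t+2))s₃ + ((t-1)³/(t+2))s₄`. -/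
noncomputable def eE (t a b c : ℝ) : ℝ :=
  s1 a b c - s2 a b c - ((4*t^2 + 5*t + 3)/(t+2)) * s3 a b c + ((t-1)^3/(t+2)) * s4 a b c

theorem eE_evals_nonneg (t : ℝ) (ht : 7 ≤ t) (x : ℝ) (hx : 0 ≤ x) :
    eE t 0 x 1 = x*(x+1)*(x-1)^2 ∧
    eE t x 1 1 = x*(x-t)^2*(2*x + (t-7)/(t+2)) ∧
    0 ≤ eE t x 1 1 ∧ 0 ≤ eE t 0 x 1 := by
  have ht2 : (0:ℝ) < t + 2 := by linarith
  have h1 : eE t 0 x 1 = x*(x+1)*(x-1)^2 := by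
    unfold eE s1 s2 s3 s4
    field_simp
    ring
  have h2 : eE t x 1 1 = x*(x-t)^2*(2*x + (t-7)/(t+2)) := by
    unfold eE s1 s2 s3 s4
    field_simp
    ring
  refine ⟨h1, h2, ?_, ?_⟩
  · rw [h2]
    have : 0 ≤ (t-7)/(t+2) := div_nonneg (by linarith) ht2.le
    positivity
  · rw [h1]
    positivity
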